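/- If a graph G contains an induced cycle of length k ≥ 6, then the complement graph of G contains an induced 4-cycle (hence is not chordal). -/
import Mathlib


/-- `G` has an induced cycle of length `k`: an injection `ZMod k → V` whose
image induces exactly the cycle adjacencies. -/
def SimpleGraph.HasInducedCycle {W : Type*} (G : SimpleGraph W) (k : ℕ) : Prop :=
  3 ≤ k ∧ ∃ f : ZMod k → W, Function.Injective f ∧
    ∀ i j : ZMod k, G.Adj (f i) (f j) ↔ (i = j + 1 ∨ j = i + 1)

/-- Positions on the long cycle used to build the 4-cycle in the complement. -/
def en4 : ZMod 4 → ℕ :=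
  fun i => if i = 0 then 0 else if i = 1 then 3 else if i = 2 then 1 else 4

lemma en4_lt : ∀ i : ZMod 4, en4 i < 5 := by decide

lemma en4_inj : ∀ i j : ZMod 4, en4 i = en4 j → i = j := by decide

lemma en4_adj : ∀ i j : ZMod 4,
    ((¬ en4 i = en4 j) ∧ ¬(en4 i = en4 j + 1 ∨ en4 j = en4 i + 1)) ↔
      (i = j + 1 ∨ j = i + 1) := by decide

/-- If `G` contains an induced cycle of length `k ≥ 6`, then the complement
of `G` contains an induced 4-cycle. -/
theorem stmt15 {V : Type*} (G : SimpleGraph V) (k : ℕ) (hk : 6 ≤ k)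
    (h : G.HasInducedCycle k) : (Gᶜ).HasInducedCycle 4 := by
  obtain ⟨-, f, hinj, hadj⟩ := h
  haveI : NeZero k := ⟨by omega⟩
  have key : ∀ a b : ℕ, a < k → b < k → (((a : ZMod k) = (b : ZMod k)) ↔ a = b) := by
    intro a b ha hb
    constructor
    · intro hab
      rw [← ZMod.val_cast_of_lt ha, ← ZMod.val_cast_of_lt hb, hab]
    · intro hab; rw [hab]
  have inj' : ∀ a b : ℕ, a < 5 → b < 5 → (f a = f b ↔ a = b) := by
    intro a b ha hb
    rw [hinj.eq_iff, key a b (by omega) (by omega)]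
  have adj' : ∀ a b : ℕ, a < 5 → b < 5 →
      (G.Adj (f a) (f b) ↔ (a = b + 1 ∨ b = a + 1)) := by
    intro a b ha hb
    rw [hadj]
    have h1 : ((b : ZMod k) + 1) = ((b + 1 : ℕ) : ZMod k) := by push_cast; ring
    have h2 : ((a : ZMod k) + 1) = ((a + 1 : ℕ) : ZMod k) := by push_cast; ring
    rw [h1, h2, key a (b + 1) (by omega) (by omega), key b (a + 1) (by omega) (by omega)]
  refine ⟨by norm_num, fun i => f ((en4 i : ℕ) : ZMod k), ?_, ?_⟩
  · intro i j hij
    exact en4_inj i j ((inj' _ _ (en4_lt i) (en4_lt j)).mp hij)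
  · intro i j
    rw [SimpleGraph.compl_adj, adj' _ _ (en4_lt i) (en4_lt j),
      ne_eq, inj' _ _ (en4_lt i) (en4_lt j)]
    exact en4_adj i j
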